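/- arXiv:0804.1884 — 3 statements merged into one kernel-verified Lean document; each statement's English description precedes it below -/
import Mathlib

section
/- (Proposition 2.3(a), case (A1)) Suppose |J| ≥ 2, all T_j > 0, inf_{j∈J} T_j ≥ 1, and at least two indices j ∈ J satisfy T_j = 1. Then 𝔉_T^+ = {δ_c : c > 0}. -/
/-!
Two weights equal to `1` give `F̄(t) ≤ F̄(t)²`, so the survival function of a fixed point only
takes the values `0` and `1`. The half-lines `[t, ∞)` form a π-system generating the Borel sets,
so such a probability measure is zero-one, hence a Dirac mass. Conversely, when all `T_j ≥ 1`
and one of them equals `1`, both sides of the fixed-point equation for `δ_c`, `c > 0`, are the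
indicator of `t ≤ c`.
-/

open MeasureTheory Set

/-- `μ ∈ 𝔉_T`: `μ` is a (distributional) fixed point of the min-type equation
`W =d inf_{j∈J} T_j W_j` for a family of positive weights `T`, expressed via the
survival function `F̄(t) = μ [t, ∞)`. -/
def MemFP {ι : Type*} [Countable ι] (T : ι → ℝ) (μ : Measure ℝ) : Prop :=
  IsProbabilityMeasure μ ∧
    ∀ t : ℝ, (μ (Ici t)).toReal = ∏' j, (μ (Ici (t / T j))).toReal

/-- `μ ∈ 𝔉_T^+`: a fixed point concentrated on `(0, ∞)`. -/
def MemFPpos {ι : Type*} [Countable ι] (T : ι → ℝ) (μ : Measure ℝ) : Prop :=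
  MemFP T μ ∧ μ (Ioi 0) = 1

open Filter

lemma Real.le_of_le_iInf {ι : Type*} {f : ι → ℝ} {a : ℝ} (ha : 0 < a) (h : a ≤ ⨅ i, f i)
    (i : ι) : a ≤ f i := by
  by_cases hf : BddBelow (range f)
  · exact h.trans (ciInf_le hf i)
  · rw [Real.iInf_of_not_bddBelow hf] at h
    exact absurd h ha.not_ge

lemma HasProd.le_mul_of_ne {ι : Type*} {f : ι → ℝ} {a : ℝ} (hf : HasProd f a)
    (h0 : ∀ i, 0 ≤ f i) (h1 : ∀ i, f i ≤ 1) {i j : ι} (hij : i ≠ j) : a ≤ f i * f j := by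
  classical
  refine le_of_tendsto hf ?_
  filter_upwards [eventually_ge_atTop ({i, j} : Finset ι)] with s hs
  calc ∏ k ∈ s, f k = (∏ k ∈ s \ {i, j}, f k) * (f i * f j) := by
        rw [← Finset.prod_pair hij, Finset.prod_sdiff hs]
    _ ≤ f i * f j :=
        mul_le_of_le_one_left (mul_nonneg (h0 i) (h0 j))
          (Finset.prod_le_one (fun k _ ↦ h0 k) (fun k _ ↦ h1 k))

lemma MemFP.measure_Ici_eq_zero_or_one {ι : Type*} [Countable ι] {T : ι → ℝ} {μ : Measure ℝ}
    (hμ : MemFP T μ) {j k : ι} (hjk : j ≠ k) (hj : T j = 1) (hk : T k = 1) (t : ℝ) :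
    μ (Ici t) = 0 ∨ μ (Ici t) = 1 := by
  obtain ⟨_, hfix⟩ := hμ
  set F : ℝ → ℝ := fun s ↦ (μ (Ici s)).toReal
  have hF0 (s : ℝ) : 0 ≤ F s := ENNReal.toReal_nonneg
  have hF1 (s : ℝ) : F s ≤ 1 := by simpa using ENNReal.toReal_mono ENNReal.one_ne_top prob_le_one
  suffices F t = 0 ∨ F t = 1 by
    simpa [F, ENNReal.toReal_eq_zero_iff, ENNReal.toReal_eq_one_iff, measure_ne_top] using this
  by_cases hm : Multipliable fun i ↦ F (t / T i)
  · have hsq : F t ≤ F t * F t := by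
      have := (hfix t ▸ hm.hasProd).le_mul_of_ne (fun _ ↦ hF0 _) (fun _ ↦ hF1 _) hjk
      simpa [hj, hk] using this
    have : F t * (1 - F t) = 0 := by nlinarith [hF0 t, hF1 t]
    rcases mul_eq_zero.mp this with h | h
    · exact .inl h
    · exact .inr (by linarith)
  · exact .inr ((hfix t).trans (tprod_eq_one_of_not_multipliable hm))

lemma isZeroOneMeasure_of_isPiSystem {α : Type*} [m : MeasurableSpace α] {μ : Measure α}
    [IsProbabilityMeasure μ] {C : Set (Set α)} (hgen : m = MeasurableSpace.generateFrom C)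
    (hC : IsPiSystem C) (h : ∀ s ∈ C, μ s = 0 ∨ μ s = 1) : IsZeroOneMeasure μ := by
  refine ⟨fun s hs ↦ MeasurableSpace.induction_on_inter hgen hC (by simp) h ?_ ?_ s hs⟩
  · rintro t htm (ht | ht) <;> simp [prob_compl_eq_one_sub htm, ht]
  · intro f _ _ hf
    by_cases hall : ∀ i, μ (f i) = 0
    · exact .inl (measure_iUnion_null hall)
    · obtain ⟨i, hi⟩ := not_forall.mp hall
      refine .inr (le_antisymm prob_le_one ?_)
      calc 1 = μ (f i) := ((hf i).resolve_left hi).symm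
        _ ≤ μ (⋃ i, f i) := measure_mono (subset_iUnion f i)

lemma exists_eq_dirac_of_measure_Ici {μ : Measure ℝ} [IsProbabilityMeasure μ]
    (h : ∀ t, μ (Ici t) = 0 ∨ μ (Ici t) = 1) : ∃ c, μ = Measure.dirac c := by
  have : IsZeroOneMeasure μ := isZeroOneMeasure_of_isPiSystem
    (borel_eq_generateFrom_Ici ℝ) isPiSystem_Ici (by rintro _ ⟨t, rfl⟩; exact h t)
  exact IsZeroOneMeasure.exists_eq_dirac

lemma memFP_dirac {ι : Type*} [Countable ι] {T : ι → ℝ} (hT : ∀ j, 1 ≤ T j) {j : ι}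
    (hj : T j = 1) {c : ℝ} (hc : 0 ≤ c) : MemFP T (Measure.dirac c) := by
  refine ⟨inferInstance, fun t ↦ ?_⟩
  rcases le_or_gt t c with htc | htc
  · have hle (i : ι) : t / T i ≤ c := by
      rcases le_or_gt t 0 with ht | ht
      · exact (div_nonpos_of_nonpos_of_nonneg ht (zero_le_one.trans (hT i))).trans hc
      · exact (div_le_self ht.le (hT i)).trans htc
    simp [htc, hle]
  · have hnot : c ∉ Ici t := notMem_Ici.2 htc
    refine ((hasProd_zero_of_exists_eq_zero ⟨j, ?_⟩).tprod_eq.trans ?_).symm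
    · simp [hj, hnot]
    · simp [hnot]

theorem stmt6_general {ι : Type*} [Countable ι] (T : ι → ℝ)
    (hinf : 1 ≤ ⨅ j, T j)
    (htwo : ∃ j k : ι, j ≠ k ∧ T j = 1 ∧ T k = 1) :
    {μ : Measure ℝ | MemFPpos T μ} =
      {μ : Measure ℝ | ∃ c : ℝ, 0 < c ∧ μ = Measure.dirac c} := by
  obtain ⟨j, k, hjk, hj, hk⟩ := htwo
  ext μ
  constructor
  · rintro ⟨hμ, hpos⟩
    have : IsProbabilityMeasure μ := hμ.1
    obtain ⟨c, rfl⟩ := exists_eq_dirac_of_measure_Ici (hμ.measure_Ici_eq_zero_or_one hjk hj hk)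
    exact ⟨c, by simpa [indicator_apply] using hpos, rfl⟩
  · rintro ⟨c, hc, rfl⟩
    exact ⟨memFP_dirac (Real.le_of_le_iInf one_pos hinf) hj hc.le, Measure.dirac_apply_of_mem hc⟩

/-- (Proposition 2.3(a), case (A1)) If `inf_j T_j ≥ 1` and at least two indices
carry the weight `1`, then `𝔉_T^+ = {δ_c : c > 0}`. -/
theorem stmt6 {ι : Type*} [Countable ι] (T : ι → ℝ)
    (hT : ∀ j, 0 < T j) (hinf : 1 ≤ ⨅ j, T j)
    (htwo : ∃ j k : ι, j ≠ k ∧ T j = 1 ∧ T k = 1) :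
    {μ : Measure ℝ | MemFPpos T μ} =
      {μ : Measure ℝ | ∃ c : ℝ, 0 < c ∧ μ = Measure.dirac c} :=
  stmt6_general T hinf htwo
end

section
/- (Proposition 2.3(a), case (A2)) Suppose J = ℕ, all T_j > 0, inf_{j∈ℕ} T_j ≥ 1, at most one index j satisfies T_j = 1, and liminf_{j→∞} T_j = 1. Then 𝔉_T^+ = {δ_c : c > 0}. -/
/-! If infinitely many weights lie below every `b > 1`, two factors of the fixed-point equation
give `F̄(t) ≤ F̄(u)²` for all `0 < u < t`; letting `u ↑ t` (`F̄` is left continuous) yields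
`F̄(t) ≤ F̄(t)²`, so `F̄` only takes the values `0` and `1`. Then `μ` is a zero-one measure,
hence a Dirac mass. Conversely `δ_c` is a fixed point because all `T_j ≥ 1` while some `T_j`
is arbitrarily close to `1`. -/

open MeasureTheory Set Filter
open scoped Topology

-- `liminf u f ≠ 0` excludes the junk value `sSup` takes on a set that is not bounded above.
theorem Real.frequently_lt_of_liminf_lt {α : Type*} {f : Filter α} {u : α → ℝ} {b : ℝ}
    (h₀ : liminf u f ≠ 0) (h : liminf u f < b) : ∃ᶠ x in f, u x < b := by
  refine Filter.frequently_lt_of_liminf_lt ?_ h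
  by_contra hu
  exact h₀ (Real.sSup_of_not_bddAbove hu)

theorem Real.tprod_le_prod_of_le_one {ι : Type*} {f : ι → ℝ} (h₀ : ∀ i, 0 ≤ f i)
    (h₁ : ∀ i, f i ≤ 1) (s : Finset ι) : ∏' i, f i ≤ ∏ i ∈ s, f i := by
  have hanti := Finset.prod_anti_set_of_le_one h₀ h₁
  have hf : HasProd f _ := tendsto_atTop_ciInf hanti
    ⟨0, by rintro _ ⟨s, rfl⟩; exact Finset.prod_nonneg fun i _ ↦ h₀ i⟩
  exact hf.tprod_eq ▸ hanti.le_of_tendsto hf s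

theorem tendsto_measure_Ici_nhdsLT {μ : Measure ℝ} [IsFiniteMeasure μ] (t : ℝ) :
    Tendsto (fun u ↦ μ (Ici u)) (𝓝[<] t) (𝓝 (μ (Ici t))) := by
  have h := tendsto_measure_biInter_gt (μ := μ) (a := OrderDual.toDual t)
    (s := fun r ↦ Ici (OrderDual.ofDual r)) (fun _ _ ↦ measurableSet_Ici.nullMeasurableSet)
    (fun _ _ _ hij ↦ Ici_subset_Ici.mpr hij)
    ⟨OrderDual.toDual (t - 1), show t - 1 < t by linarith, measure_ne_top _ _⟩
  have hset : ⋂ r > OrderDual.toDual t, Ici (OrderDual.ofDual r) = Ici t := by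
    ext x
    simp only [mem_iInter, mem_Ici]
    exact ⟨fun hx ↦ le_of_forall_lt_imp_le_of_dense fun u hu ↦ hx (OrderDual.toDual u) hu,
      fun hx r hr ↦ (show OrderDual.ofDual r < t from hr).le.trans hx⟩
  rwa [hset] at h

theorem isZeroOneMeasure_of_measure_Ici {α : Type*} [TopologicalSpace α] [LinearOrder α]
    [OrderTopology α] [SecondCountableTopology α] [MeasurableSpace α] [BorelSpace α]
    (μ : Measure α) [IsProbabilityMeasure μ] (h : ∀ t, μ (Ici t) = 0 ∨ μ (Ici t) = 1) :
    IsZeroOneMeasure μ := by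
  refine ⟨fun s hs ↦ ?_⟩
  induction s, hs using MeasurableSpace.induction_on_inter
    (BorelSpace.measurable_eq.trans (borel_eq_generateFrom_Ici α)) isPiSystem_Ici with
  | empty => exact Or.inl measure_empty
  | basic _ ht => obtain ⟨t, rfl⟩ := ht; exact h t
  | compl s hs ih =>
    rw [prob_compl_eq_one_sub hs]
    rcases ih with h | h <;> simp [h]
  | iUnion f _ _ ih =>
    by_cases hf : ∀ i, μ (f i) = 0
    · exact Or.inl (measure_iUnion_null hf)
    · obtain ⟨i, hi⟩ := not_forall.mp hf
      exact Or.inr (le_antisymm prob_le_one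
        ((ih i).resolve_left hi ▸ measure_mono (subset_iUnion f i)))

namespace MemFP

variable {ι : Type*} [Countable ι] {T : ι → ℝ} {μ : Measure ℝ}

theorem measure_Ici_toReal_le_sq (hμ : MemFP T μ) {i j : ι} (hij : i ≠ j) {t u : ℝ}
    (hi : u ≤ t / T i) (hj : u ≤ t / T j) :
    (μ (Ici t)).toReal ≤ (μ (Ici u)).toReal ^ 2 := by
  classical
  have := hμ.1
  have hanti : ∀ {a b : ℝ}, a ≤ b → (μ (Ici b)).toReal ≤ (μ (Ici a)).toReal := fun h ↦
    ENNReal.toReal_mono (measure_ne_top _ _) (measure_mono (Ici_subset_Ici.mpr h))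
  calc (μ (Ici t)).toReal = ∏' k, (μ (Ici (t / T k))).toReal := hμ.2 t
    _ ≤ ∏ k ∈ {i, j}, (μ (Ici (t / T k))).toReal :=
      Real.tprod_le_prod_of_le_one (fun _ ↦ ENNReal.toReal_nonneg)
        (fun _ ↦ measureReal_le_one) _
    _ = (μ (Ici (t / T i))).toReal * (μ (Ici (t / T j))).toReal := Finset.prod_pair hij
    _ ≤ (μ (Ici u)).toReal * (μ (Ici u)).toReal :=
      mul_le_mul (hanti hi) (hanti hj) ENNReal.toReal_nonneg ENNReal.toReal_nonneg
    _ = (μ (Ici u)).toReal ^ 2 := (sq _).symm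

end MemFP

namespace MemFPpos

variable {ι : Type*} [Countable ι] {T : ι → ℝ} {μ : Measure ℝ}

theorem measure_Ici_eq_zero_or_one (hμ : MemFPpos T μ) (hT : ∀ j, 0 < T j)
    (hfreq : ∀ b > 1, {j | T j < b}.Nontrivial) (t : ℝ) :
    μ (Ici t) = 0 ∨ μ (Ici t) = 1 := by
  have := hμ.1.1
  rcases le_or_gt t 0 with ht | ht
  · exact Or.inr (le_antisymm prob_le_one (hμ.2 ▸ measure_mono fun x hx ↦ ht.trans hx.le))
  set G : ℝ → ℝ := fun u ↦ (μ (Ici u)).toReal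
  have hsq : G t ≤ G t ^ 2 := by
    have hlim : Tendsto (fun u ↦ G u ^ 2) (𝓝[<] t) (𝓝 (G t ^ 2)) :=
      ((ENNReal.tendsto_toReal (measure_ne_top _ _)).comp (tendsto_measure_Ici_nhdsLT t)).pow 2
    refine ge_of_tendsto hlim ?_
    filter_upwards [Ioo_mem_nhdsLT ht] with u hu
    have hu_le : ∀ k, T k < t / u → u ≤ t / T k := fun k hk ↦ by
      rw [le_div_iff₀ (hT k)]
      rw [lt_div_iff₀ hu.1] at hk
      linarith
    obtain ⟨i, hi, j, hj, hij⟩ := hfreq (t / u) ((one_lt_div hu.1).mpr hu.2)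
    exact hμ.1.measure_Ici_toReal_le_sq hij (hu_le i hi) (hu_le j hj)
  have hG0 : 0 ≤ G t := ENNReal.toReal_nonneg
  have hG1 : G t ≤ 1 := measureReal_le_one
  have hG : G t * (1 - G t) = 0 :=
    le_antisymm (by nlinarith) (mul_nonneg hG0 (by linarith))
  rcases mul_eq_zero.mp hG with h | h
  · exact Or.inl ((ENNReal.toReal_eq_zero_iff _).mp h |>.resolve_right (measure_ne_top _ _))
  · exact Or.inr ((ENNReal.toReal_eq_one_iff _).mp (by linarith))

theorem exists_eq_dirac (hμ : MemFPpos T μ) (hT : ∀ j, 0 < T j)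
    (hfreq : ∀ b > 1, {j | T j < b}.Nontrivial) : ∃ c, 0 < c ∧ μ = Measure.dirac c := by
  have := hμ.1.1
  have := isZeroOneMeasure_of_measure_Ici μ (hμ.measure_Ici_eq_zero_or_one hT hfreq)
  obtain ⟨c, rfl⟩ := IsZeroOneMeasure.exists_eq_dirac (μ := μ)
  refine ⟨c, ?_, rfl⟩
  by_contra hc
  simpa [Measure.dirac_apply, hc] using hμ.2

end MemFPpos

theorem memFPpos_dirac {ι : Type*} [Countable ι] {T : ι → ℝ} (hT : ∀ j, 1 ≤ T j)
    (hfreq : ∀ b > 1, ∃ j, T j < b) {c : ℝ} (hc : 0 < c) : MemFPpos T (Measure.dirac c) := by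
  refine ⟨⟨inferInstance, fun t ↦ ?_⟩, Measure.dirac_apply_of_mem hc⟩
  have hTpos : ∀ j, 0 < T j := fun j ↦ one_pos.trans_le (hT j)
  rcases le_or_gt t c with htc | htc
  · have hle : ∀ j, t / T j ≤ c := fun j ↦ by
      rw [div_le_iff₀ (hTpos j)]
      nlinarith [hT j]
    simp [htc, hle]
  · obtain ⟨j, hj⟩ := hfreq (t / c) ((one_lt_div hc).mpr htc)
    have hlt : c < t / T j := by
      rw [lt_div_iff₀ (hTpos j)]
      rw [lt_div_iff₀ hc] at hj
      linarith
    rw [tprod_of_exists_eq_zero ⟨j, by simp [hlt]⟩]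
    simp [htc]

theorem stmt7_general (T : ℕ → ℝ)
    (hT : ∀ j, 0 < T j) (hinf : 1 ≤ ⨅ j, T j)
    (hliminf : Filter.liminf T Filter.atTop = 1) :
    {μ : Measure ℝ | MemFPpos T μ} =
      {μ : Measure ℝ | ∃ c : ℝ, 0 < c ∧ μ = Measure.dirac c} := by
  have hT_ge : ∀ j, 1 ≤ T j := fun j ↦
    hinf.trans (ciInf_le ⟨0, by rintro _ ⟨k, rfl⟩; exact (hT k).le⟩ j)
  have hfreq : ∀ b > 1, ∃ᶠ j in atTop, T j < b := fun b hb ↦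
    Real.frequently_lt_of_liminf_lt (by rw [hliminf]; exact one_ne_zero) (hliminf ▸ hb)
  ext μ
  constructor
  · intro hμ
    exact hμ.exists_eq_dirac hT fun b hb ↦
      (Nat.frequently_atTop_iff_infinite.mp (hfreq b hb)).nontrivial
  · rintro ⟨c, hc, rfl⟩
    exact memFPpos_dirac hT_ge (fun b hb ↦ (hfreq b hb).exists) hc

/-- (Proposition 2.3(a), case (A2)) If `J = ℕ`, `inf_j T_j ≥ 1`, at most one
index carries the weight `1`, and `liminf_{j→∞} T_j = 1`, then
`𝔉_T^+ = {δ_c : c > 0}`. -/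
theorem stmt7 (T : ℕ → ℝ)
    (hT : ∀ j, 0 < T j) (hinf : 1 ≤ ⨅ j, T j)
    (hone : ∀ j k : ℕ, T j = 1 → T k = 1 → j = k)
    (hliminf : Filter.liminf T Filter.atTop = 1) :
    {μ : Measure ℝ | MemFPpos T μ} =
      {μ : Measure ℝ | ∃ c : ℝ, 0 < c ∧ μ = Measure.dirac c} :=
  stmt7_general T hT hinf hliminf
end

section
/- (Proposition 2.3(b)) Suppose |J| ≥ 2, all T_j > 0, exactly one index j ∈ J satisfies T_j = 1, and c := inf_{j∈J*} T_j > 1 where J* := {j ∈ J : T_j ≠ 1}. Then 𝔉_T^+ consists exactly of all distributions F concentrated on (0,∞) with 0 < l_F ≤ u_F < ∞ and c ≥ u_F / l_F; in particular {δ_c' : c' > 0} ⊆ 𝔉_T^+. -/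
open MeasureTheory Set

/-- `l_F = sup {t ≥ 0 : F(t) = 0}`, where `F(t) = μ (-∞, t)`. -/
noncomputable def lF (μ : Measure ℝ) : ℝ :=
  sSup {t : ℝ | 0 ≤ t ∧ μ (Iio t) = 0}

/-- `u_F = inf {t ≥ 0 : F(t) = 1}`, where `F(t) = μ (-∞, t)` (as a real number;
`u_F < ∞` is expressed by nonemptiness of the defining set). -/
noncomputable def uF (μ : Measure ℝ) : ℝ :=
  sInf {t : ℝ | 0 ≤ t ∧ μ (Iio t) = 1}

/-!
Write `F̄(t) = μ [t, ∞)`. Splitting off the factor of the index `j₀` with `T j₀ = 1`, the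
fixed-point equation reads `F̄(t) = F̄(t) · ∏_{j ≠ j₀} F̄(t / T j)` with all factors in `[0, 1]`.
So it holds iff `F̄(t / T j) = 1`, i.e. `t / T j ≤ l_F`, whenever `j ≠ j₀` and `F̄(t) > 0`, which
for `t` ranging up to `u_F` means `u_F ≤ l_F · T j` for all `j ≠ j₀`, i.e. `u_F / l_F ≤ c`.
Applied to a single `j ≠ j₀`, the same implication shows that a fixed point on `(0, ∞)` has
`u_F < ∞` and `l_F > 0`.
-/

open Filter Topology

lemma tprod_le_prod_of_nonneg_of_le_one {ι : Type*} {f : ι → ℝ} (h0 : ∀ i, 0 ≤ f i)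
    (h1 : ∀ i, f i ≤ 1) (s : Finset ι) : ∏' i, f i ≤ ∏ i ∈ s, f i := by
  have hbdd : BddBelow (range fun s : Finset ι => ∏ i ∈ s, f i) :=
    ⟨0, by rintro _ ⟨s, rfl⟩; exact Finset.prod_nonneg fun i _ => h0 i⟩
  have hf : HasProd f (⨅ s : Finset ι, ∏ i ∈ s, f i) :=
    tendsto_atTop_ciInf (Finset.prod_anti_set_of_le_one h0 h1) hbdd
  rw [hf.tprod_eq]
  exact ciInf_le hbdd s

section Measure

variable {μ : Measure ℝ}

lemma measure_Iio_eq_one_iff [IsProbabilityMeasure μ] {t : ℝ} :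
    μ (Iio t) = 1 ↔ μ (Ici t) = 0 := by
  rw [← compl_Ici, prob_compl_eq_one_iff measurableSet_Ici]

lemma measure_Iio_eq_zero_iff [IsProbabilityMeasure μ] {t : ℝ} :
    μ (Iio t) = 0 ↔ μ (Ici t) = 1 := by
  rw [← compl_Ici, prob_compl_eq_zero_iff measurableSet_Ici]

lemma measure_Iio_zero_eq_zero_of_measure_Ioi [IsProbabilityMeasure μ]
    (h : μ (Ioi 0) = 1) : μ (Iio 0) = 0 :=
  measure_mono_null (fun _ hx => not_lt.2 (le_of_lt hx))
    ((prob_compl_eq_zero_iff measurableSet_Ioi).2 h)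

lemma le_of_measure_Iio_eq_zero {s v : ℝ} (hs : μ (Iio s) = 0) (hv : μ (Iio v) ≠ 0) :
    s ≤ v :=
  le_of_not_gt fun h => hv (measure_mono_null (Iio_subset_Iio h.le) hs)

lemma exists_nonneg_measure_Iio_ne_zero [NeZero μ] : ∃ s, 0 ≤ s ∧ μ (Iio s) ≠ 0 := by
  obtain ⟨x, hx, hx0⟩ := (((tendsto_measure_Iic_atTop μ).eventually_ne
    (Measure.measure_univ_ne_zero.2 (NeZero.ne μ))).and (eventually_ge_atTop 0)).exists
  refine ⟨x + 1, by linarith, fun h => hx ?_⟩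
  exact measure_mono_null (Iic_subset_Iio.2 (lt_add_one x)) h

lemma exists_pos_measure_Ici_ne_zero (h : μ (Ioi 0) ≠ 0) : ∃ t > 0, μ (Ici t) ≠ 0 := by
  rw [← iUnion_Ici_eq_Ioi_of_lt_of_tendsto (fun n : ℕ => by positivity)
    tendsto_one_div_add_atTop_nhds_zero_nat] at h
  obtain ⟨n, hn⟩ := not_forall.1 (mt measure_iUnion_null_iff.2 h)
  exact ⟨_, by positivity, hn⟩

lemma bddAbove_setOf_measure_Iio_eq_zero (hS1 : {t : ℝ | 0 ≤ t ∧ μ (Iio t) = 1}.Nonempty) :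
    BddAbove {t : ℝ | 0 ≤ t ∧ μ (Iio t) = 0} := by
  obtain ⟨v, -, hv⟩ := hS1
  refine ⟨v, fun s hs => le_of_measure_Iio_eq_zero hs.2 (by simp [hv])⟩

lemma le_lF (hS1 : {t : ℝ | 0 ≤ t ∧ μ (Iio t) = 1}.Nonempty) {t : ℝ} (ht0 : 0 ≤ t)
    (ht : μ (Iio t) = 0) : t ≤ lF μ :=
  le_csSup (bddAbove_setOf_measure_Iio_eq_zero hS1) ⟨ht0, ht⟩

lemma measure_Iio_lF_eq_zero (h0 : μ (Iio 0) = 0)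
    (hS1 : {t : ℝ | 0 ≤ t ∧ μ (Iio t) = 1}.Nonempty) : μ (Iio (lF μ)) = 0 := by
  obtain ⟨u, -, hlim, hmem⟩ := exists_seq_tendsto_sSup (S := {t : ℝ | 0 ≤ t ∧ μ (Iio t) = 0})
    ⟨0, le_rfl, h0⟩ (bddAbove_setOf_measure_Iio_eq_zero hS1)
  refine measure_mono_null (fun x hx => ?_) (measure_iUnion_null fun n => (hmem n).2)
  obtain ⟨n, hn⟩ := (hlim.eventually (lt_mem_nhds hx)).exists
  exact mem_iUnion.2 ⟨n, hn⟩

lemma uF_le {t : ℝ} (ht0 : 0 ≤ t) (ht : μ (Iio t) = 1) : uF μ ≤ t :=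
  csInf_le ⟨0, fun _ h => h.1⟩ ⟨ht0, ht⟩

lemma le_uF [IsProbabilityMeasure μ] (hS1 : {t : ℝ | 0 ≤ t ∧ μ (Iio t) = 1}.Nonempty) {t : ℝ}
    (ht : μ (Iio t) ≠ 1) : t ≤ uF μ := by
  refine le_of_not_gt fun h => ht ?_
  obtain ⟨s, hs, hst⟩ := exists_lt_of_csInf_lt hS1 h
  exact le_antisymm prob_le_one (hs.2 ▸ measure_mono (Iio_subset_Iio hst.le))

lemma lF_le_uF (h0 : μ (Iio 0) = 0) (hS1 : {t : ℝ | 0 ≤ t ∧ μ (Iio t) = 1}.Nonempty) :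
    lF μ ≤ uF μ :=
  le_csInf hS1 fun _ hv => csSup_le ⟨0, le_rfl, h0⟩ fun _ hs =>
    le_of_measure_Iio_eq_zero hs.2 (by simp [hv.2])

lemma lF_dirac {c : ℝ} (hc : 0 ≤ c) : lF (Measure.dirac c) = c := by
  have : {t : ℝ | 0 ≤ t ∧ Measure.dirac c (Iio t) = 0} = Icc 0 c := by
    ext t; simp [Measure.dirac_apply', indicator_apply]
  rw [lF, this, csSup_Icc hc]

lemma uF_dirac {c : ℝ} (hc : 0 ≤ c) : uF (Measure.dirac c) = c := by
  have : {t : ℝ | 0 ≤ t ∧ Measure.dirac c (Iio t) = 1} = Ioi c := by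
    ext t; simpa [Measure.dirac_apply', indicator_apply] using fun h => hc.trans h.le
  rw [uF, this, csInf_Ioi]

end Measure

lemma div_le_iInf_subtype_iff {ι : Type*} {T : ι → ℝ} {p : ι → Prop} [Nonempty {j // p j}]
    (hT : ∀ j, 0 ≤ T j) {u l : ℝ} (hl : 0 < l) :
    u / l ≤ ⨅ j : {j // p j}, T j.1 ↔ ∀ j, p j → u ≤ l * T j := by
  rw [le_ciInf_iff ⟨0, by rintro _ ⟨j, rfl⟩; exact hT j⟩, Subtype.forall]
  exact forall_congr' fun j => forall_congr' fun _ => by rw [div_le_iff₀ hl, mul_comm]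

section FixedPoint

variable {ι : Type*} [Countable ι] {T : ι → ℝ} {μ : Measure ℝ} {j₀ : ι}

lemma MemFP.measure_Iio_div_eq_zero (h : MemFP T μ) (hj₀ : T j₀ = 1) {j : ι} (hj : j ≠ j₀)
    {t : ℝ} (ht : μ (Ici t) ≠ 0) : μ (Iio (t / T j)) = 0 := by
  classical
  obtain ⟨hprob, hfix⟩ := h
  set f : ι → ℝ := fun i => (μ (Ici (t / T i))).toReal
  have hf1 : ∀ i, f i ≤ 1 := fun i => by
    simpa using ENNReal.toReal_mono ENNReal.one_ne_top prob_le_one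
  have hpos : 0 < (μ (Ici t)).toReal := ENNReal.toReal_pos ht (measure_ne_top μ _)
  have hle : (μ (Ici t)).toReal ≤ (μ (Ici t)).toReal * f j := calc
    _ = ∏' i, f i := hfix t
    _ ≤ ∏ i ∈ {j₀, j}, f i :=
      tprod_le_prod_of_nonneg_of_le_one (fun _ => ENNReal.toReal_nonneg) hf1 _
    _ = _ := by rw [Finset.prod_pair hj.symm]; simp [f, hj₀]
  have hfj : f j = 1 := le_antisymm (hf1 j) ((le_mul_iff_one_le_right hpos).1 hle)
  exact measure_Iio_eq_zero_iff.2 ((ENNReal.toReal_eq_one_iff _).1 hfj)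

lemma MemFP.le_lF_mul (h : MemFP T μ) (hj₀ : T j₀ = 1) {j : ι} (hj : j ≠ j₀) (hTj : 0 < T j)
    (hS1 : {t : ℝ | 0 ≤ t ∧ μ (Iio t) = 1}.Nonempty) {t : ℝ} (ht0 : 0 ≤ t)
    (ht : μ (Ici t) ≠ 0) : t ≤ lF μ * T j := by
  rw [← div_le_iff₀ hTj]
  exact le_lF hS1 (div_nonneg ht0 hTj.le) (h.measure_Iio_div_eq_zero hj₀ hj ht)

lemma MemFP.nonempty_setOf_measure_Iio_eq_one (h : MemFP T μ) (hj₀ : T j₀ = 1) {j : ι}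
    (hj : j ≠ j₀) (hTj : 0 < T j) : {t : ℝ | 0 ≤ t ∧ μ (Iio t) = 1}.Nonempty := by
  have := h.1
  obtain ⟨s, hs0, hs⟩ := exists_nonneg_measure_Iio_ne_zero (μ := μ)
  refine ⟨s * T j + 1, by positivity, measure_Iio_eq_one_iff.2 (by_contra fun ht => ?_)⟩
  have hle := le_of_measure_Iio_eq_zero (h.measure_Iio_div_eq_zero hj₀ hj ht) hs
  rw [div_le_iff₀ hTj] at hle
  linarith

lemma MemFPpos.lF_pos (h : MemFPpos T μ) (hj₀ : T j₀ = 1) {j : ι} (hj : j ≠ j₀)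
    (hTj : 0 < T j) : 0 < lF μ := by
  obtain ⟨t, ht, hμt⟩ := exists_pos_measure_Ici_ne_zero (μ := μ) (by simp [h.2])
  have := h.1.le_lF_mul hj₀ hj hTj (h.1.nonempty_setOf_measure_Iio_eq_one hj₀ hj hTj) ht.le hμt
  exact pos_of_mul_pos_left (ht.trans_le this) hTj.le

lemma MemFPpos.uF_le_lF_mul (h : MemFPpos T μ) (hj₀ : T j₀ = 1) {j : ι} (hj : j ≠ j₀)
    (hTj : 0 < T j) : uF μ ≤ lF μ * T j := by
  have := h.1.1
  have hS1 := h.1.nonempty_setOf_measure_Iio_eq_one hj₀ hj hTj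
  have h0 := measure_Iio_zero_eq_zero_of_measure_Ioi h.2
  refine le_of_forall_lt_imp_le_of_dense fun t ht => ?_
  rcases lt_or_ge t 0 with ht0 | ht0
  · exact ht0.le.trans (mul_nonneg (le_lF hS1 le_rfl h0) hTj.le)
  · exact h.1.le_lF_mul hj₀ hj hTj hS1 ht0 fun h' =>
      (uF_le ht0 (measure_Iio_eq_one_iff.2 h')).not_gt ht

lemma memFP_of_uF_le_lF_mul [IsProbabilityMeasure μ] (hj₀ : T j₀ = 1)
    (hT : ∀ j ≠ j₀, 0 < T j) (h0 : μ (Iio 0) = 0)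
    (hS1 : {t : ℝ | 0 ≤ t ∧ μ (Iio t) = 1}.Nonempty) (hu : ∀ j ≠ j₀, uF μ ≤ lF μ * T j) :
    MemFP T μ := by
  refine ⟨inferInstance, fun t => ?_⟩
  by_cases ht : μ (Ici t) = 0
  · rw [ht, tprod_of_exists_eq_zero ⟨j₀, by simp [hj₀, ht]⟩, ENNReal.toReal_zero]
  rw [tprod_eq_mulSingle j₀ fun j hj => ?_, hj₀, div_one]
  have htj : t / T j ≤ lF μ := by
    rw [div_le_iff₀ (hT j hj)]
    exact (le_uF hS1 (mt measure_Iio_eq_one_iff.1 ht)).trans (hu j hj)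
  have hμj : μ (Iio (t / T j)) = 0 :=
    measure_mono_null (Iio_subset_Iio htj) (measure_Iio_lF_eq_zero h0 hS1)
  rw [measure_Iio_eq_zero_iff.1 hμj, ENNReal.toReal_one]

theorem memFPpos_iff (hj₀ : T j₀ = 1) {j₁ : ι} (hj₁ : j₁ ≠ j₀) (hT : ∀ j, 0 < T j) :
    MemFPpos T μ ↔ IsProbabilityMeasure μ ∧ μ (Ioi 0) = 1 ∧
      {t : ℝ | 0 ≤ t ∧ μ (Iio t) = 1}.Nonempty ∧ 0 < lF μ ∧
      ∀ j ≠ j₀, uF μ ≤ lF μ * T j := by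
  refine ⟨fun h => ⟨h.1.1, h.2, h.1.nonempty_setOf_measure_Iio_eq_one hj₀ hj₁ (hT j₁),
    h.lF_pos hj₀ hj₁ (hT j₁), fun j hj => h.uF_le_lF_mul hj₀ hj (hT j)⟩, ?_⟩
  rintro ⟨hprob, hpos, hS1, -, hu⟩
  exact ⟨memFP_of_uF_le_lF_mul hj₀ (fun j _ => hT j)
    (measure_Iio_zero_eq_zero_of_measure_Ioi hpos) hS1 hu, hpos⟩

end FixedPoint

/-- (Proposition 2.3(b)) If exactly one index carries the weight `1` and
`c := inf_{j ∈ J*} T_j > 1` with `J* = {j : T_j ≠ 1}`, then `𝔉_T^+` consists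
exactly of the distributions `F` on `(0,∞)` with `0 < l_F ≤ u_F < ∞` and
`c ≥ u_F / l_F`; in particular all `δ_{c'}`, `c' > 0`, belong to `𝔉_T^+`. -/
theorem stmt8 {ι : Type*} [Countable ι] (T : ι → ℝ)
    (hcard : ∃ j k : ι, j ≠ k) (hT : ∀ j, 0 < T j)
    (hone : ∃! j : ι, T j = 1)
    (c : ℝ) (hc : c = ⨅ j : {j : ι // T j ≠ 1}, T j.1) (hc1 : 1 < c) :
    (∀ μ : Measure ℝ,
      MemFPpos T μ ↔
        (IsProbabilityMeasure μ ∧ μ (Ioi 0) = 1 ∧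
          {t : ℝ | 0 ≤ t ∧ μ (Iio t) = 1}.Nonempty ∧
          0 < lF μ ∧ lF μ ≤ uF μ ∧ uF μ / lF μ ≤ c)) ∧
    (∀ c' : ℝ, 0 < c' → MemFPpos T (Measure.dirac c')) := by
  obtain ⟨j₀, hj₀, hj₀u⟩ := hone
  have : Nontrivial ι := ⟨hcard⟩
  obtain ⟨j₁, hj₁⟩ := exists_ne j₀
  have hne (j : ι) : j ≠ j₀ ↔ T j ≠ 1 :=
    ⟨fun hj h => hj (hj₀u j h), fun h hj => h (hj ▸ hj₀)⟩
  have : Nonempty {j // T j ≠ 1} := ⟨⟨j₁, (hne j₁).1 hj₁⟩⟩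
  have hratio (μ : Measure ℝ) (hl : 0 < lF μ) :
      (∀ j ≠ j₀, uF μ ≤ lF μ * T j) ↔ uF μ / lF μ ≤ c := by
    rw [hc, div_le_iInf_subtype_iff (fun j => (hT j).le) hl]
    exact forall_congr' fun j => by rw [hne]
  have main (μ : Measure ℝ) : MemFPpos T μ ↔
      (IsProbabilityMeasure μ ∧ μ (Ioi 0) = 1 ∧ {t : ℝ | 0 ≤ t ∧ μ (Iio t) = 1}.Nonempty ∧
        0 < lF μ ∧ lF μ ≤ uF μ ∧ uF μ / lF μ ≤ c) := by
    rw [memFPpos_iff hj₀ hj₁ hT]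
    constructor
    · rintro ⟨hprob, hpos, hS1, hl, hu⟩
      exact ⟨hprob, hpos, hS1, hl,
        lF_le_uF (measure_Iio_zero_eq_zero_of_measure_Ioi hpos) hS1, (hratio μ hl).1 hu⟩
    · rintro ⟨hprob, hpos, hS1, hl, -, hu⟩
      exact ⟨hprob, hpos, hS1, hl, (hratio μ hl).2 hu⟩
  refine ⟨main, fun c' hc' => (main _).2 ⟨inferInstance, Measure.dirac_apply_of_mem hc',
    ⟨c' + 1, by positivity, by simp [Measure.dirac_apply']⟩, ?_, ?_, ?_⟩⟩
  · rwa [lF_dirac hc'.le]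
  · rw [lF_dirac hc'.le, uF_dirac hc'.le]
  · rw [lF_dirac hc'.le, uF_dirac hc'.le, div_self hc'.ne']
    exact hc1.le
end
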